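/- Let K be (κ,γ)-strongly stable for (A,B) with ‖B‖ ≤ κ, 0 < γ < 1, and let Â, B̂ satisfy ‖A − Â‖ ≤ ε and ‖B − B̂‖ ≤ ε with 0 < ε < γ/(2κ³) (so that, in particular, ‖B̂‖ ≤ κ + ε and K is (κ, γ − 2κ³ε)-strongly stable for (Â, B̂)). Let M = (M^{[0]},…,M^{[H−1]}) be a parameter tuple with ‖M^{[i]}‖ ≤ C(1−γ)^i. Let {w_s} and {ŵ_s} be disturbance sequences (zero for s ≤ 0) and ζ ≥ 0 such that for all s with t − 2H ≤ s ≤ t: ‖w_s‖ ≤ W, ‖ŵ_s‖ ≤ W + ζε, and ‖ŵ_s − w_s‖ ≤ ζε. Then the time-invariant surrogate states satisfy: ‖y^K_{t+1}(M,…,M|Â,B̂,{ŵ}) − y^K_{t+1}(M,…,M|A,B,{w})‖ ≤ [ 2κ⁵ε/(γ − 2κ³ε)² + 2κ⁵H²C(κ+ε)ε/((1−γ+2κ³ε)(γ − 2κ³ε)) + (H+1)κ²Cε/((1−γ)γ) ]·(W + ζε) + ((κ² + Hκ³C)/γ)·ζε. -/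

import Mathlib

/- Common setup: spectral norm on matrices, Euclidean vectors, strong stability,
disturbance-state transfer matrices and surrogate states/actions from the paper
"Distributed Online Control over Networks of LTI systems". -/

open scoped Matrix.Norms.L2Operator

/-- `d₂ × d₁` real matrices, equipped (via the open scoped instance) with the
spectral (L2 operator) norm. -/
abbrev Mat (p q : ℕ) := Matrix (Fin p) (Fin q) ℝ

/-- Euclidean vectors. -/
abbrev Vec (d : ℕ) := EuclideanSpace ℝ (Fin d)

/-- Matrix-vector multiplication as a map between Euclidean spaces. -/
noncomputable def mulV {m n : Type*} [Fintype m] [Fintype n] (A : Matrix m n ℝ)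
    (x : EuclideanSpace ℝ n) : EuclideanSpace ℝ m :=
  (WithLp.equiv 2 _).symm (A.mulVec ((WithLp.equiv 2 _) x))

/-- `K` is `(κ, γ)`-strongly stable for the system `(A, B)`. -/
noncomputable def StronglyStable {d₁ d₂ : ℕ} (κ γ : ℝ) (A : Mat d₁ d₁)
    (B : Mat d₁ d₂) (K : Mat d₂ d₁) : Prop :=
  ‖K‖ ≤ κ ∧ ∃ H L : Mat d₁ d₁,
    IsUnit H ∧ A - B * K = H * L * H⁻¹ ∧ ‖L‖ ≤ 1 - γ ∧ ‖H‖ ≤ κ ∧ ‖H⁻¹‖ ≤ κ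

/-- The disturbance-state transfer matrix `Ψ^{K,h}_{t,i}(M_{t−h:t} | A, B)`,
where `M s i` denotes `M_s^{[i]}`. -/
noncomputable def Psi {d₁ d₂ : ℕ} (H : ℕ) (A : Mat d₁ d₁) (B : Mat d₁ d₂) (K : Mat d₂ d₁)
    (M : ℕ → ℕ → Mat d₂ d₁) (t h i : ℕ) : Mat d₁ d₁ :=
  (if i ≤ h then (A - B * K) ^ i else 0) +
    ∑ j ∈ Finset.range (h + 1),
      if j < i ∧ i - j ≤ H then (A - B * K) ^ j * B * M (t - j) (i - j - 1) else 0

/-- The surrogate state `y^K_{t+1}(M_{t−H:t} | A, B, {w})`. -/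
noncomputable def ySurr {d₁ d₂ : ℕ} (H : ℕ) (A : Mat d₁ d₁) (B : Mat d₁ d₂) (K : Mat d₂ d₁)
    (M : ℕ → ℕ → Mat d₂ d₁) (w : ℤ → Vec d₁) (t : ℕ) : Vec d₁ :=
  ∑ i ∈ Finset.range (2 * H + 1), mulV (Psi H A B K M t H i) (w ((t : ℤ) - i))

/-- The surrogate action `v^K_{t+1}(M_{t−H:t} | A, B, {w})`. -/
noncomputable def vSurr {d₁ d₂ : ℕ} (H : ℕ) (A : Mat d₁ d₁) (B : Mat d₁ d₂) (K : Mat d₂ d₁)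
    (M : ℕ → ℕ → Mat d₂ d₁) (w : ℤ → Vec d₁) (t : ℕ) : Vec d₂ :=
  -mulV K (ySurr H A B K M w t) + ∑ i ∈ Finset.range H, mulV (M (t + 1) i) (w ((t : ℤ) - i))

/-- State-action pairs with the L2 (Euclidean) product norm. -/
abbrev XU (d₁ d₂ : ℕ) := WithLp 2 (Vec d₁ × Vec d₂)

/-- Bundling a state and an action into an L2 state-action pair. -/
noncomputable def pairXU {d₁ d₂ : ℕ} (x : Vec d₁) (u : Vec d₂) : XU d₁ d₂ :=
  (WithLp.equiv 2 _).symm (x, u)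

/-- The Euclidean space of parameter tuples `M = (M^{[0]}, …, M^{[H−1]})`;
its norm is the Frobenius norm of the tuple. -/
abbrev MTup (Hn d₁ d₂ : ℕ) := EuclideanSpace ℝ (Fin Hn × Fin d₂ × Fin d₁)

/-- The `i`-th matrix component `M^{[i]}` of a parameter tuple. -/
noncomputable def toMat {Hn d₁ d₂ : ℕ} (M : MTup Hn d₁ d₂) (i : ℕ) : Mat d₂ d₁ :=
  fun a b => if h : i < Hn then M (⟨i, h⟩, a, b) else 0

/-!
Write `X = A - B K` and `X̂ = Â - B̂ K`. Conjugating by the same `H` shows that `K` is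
`(κ, γ - 2κ³ε)`-strongly stable for `(Â, B̂)`, so `‖X ^ n‖ ≤ κ² (1 - γ) ^ n`,
`‖X̂ ^ n‖ ≤ κ² ρ̂ ^ n` with `ρ̂ = 1 - γ + 2κ³ε`, and the telescoping identity
`X̂ ^ n - X ^ n = ∑ₖ X̂ ^ k (X̂ - X) X ^ (n - 1 - k)` gives `‖X̂ ^ n - X ^ n‖ ≤ 2κ⁵ε n ρ̂ ^ (n - 1)`.
The difference of surrogate states is `∑ᵢ (Ψ̂ᵢ - Ψᵢ) ŵ_{t-i} + Ψᵢ (ŵ_{t-i} - w_{t-i})`, so it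
suffices to bound `∑ᵢ ‖Ψ̂ᵢ - Ψᵢ‖` and `∑ᵢ ‖Ψᵢ‖`. In both, the double sum over the pairs `(i, j)`
with `1 ≤ i - j ≤ H` factors, after the substitution `k = i - j - 1`, into a sum over `j` times a
sum over `k`, and all the remaining sums are geometric or arithmetico-geometric.
-/

open Finset

section Scalar

variable {x : ℝ}

lemma geom_sum_le_one_div_one_sub (hx₀ : 0 ≤ x) (hx₁ : x < 1) (n : ℕ) :
    ∑ i ∈ range n, x ^ i ≤ 1 / (1 - x) := by
  simpa [← range_eq_Ico] using geom_sum_Ico_le_of_lt_one (m := 0) (n := n) hx₀ hx₁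

lemma sum_range_succ_mul_pow_pred (x : ℝ) (n : ℕ) :
    ∑ i ∈ range (n + 1), (i : ℝ) * x ^ (i - 1) = ∑ i ∈ range n, ((i : ℝ) + 1) * x ^ i := by
  simp [sum_range_succ']

lemma sum_range_mul_pow_pred_le (hx₀ : 0 ≤ x) (hx₁ : x < 1) (n : ℕ) :
    ∑ i ∈ range n, (i : ℝ) * x ^ (i - 1) ≤ 1 / (1 - x) ^ 2 := by
  have hsum : HasSum (fun i : ℕ => ((i : ℝ) + 1) * x ^ i) (1 / (1 - x) ^ 2) := by
    simpa using hasSum_choose_mul_geometric_of_norm_lt_one 1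
      (by rwa [Real.norm_of_nonneg hx₀] : ‖x‖ < 1)
  cases n with
  | zero => simp only [range_zero, sum_empty]; positivity
  | succ n =>
    rw [sum_range_succ_mul_pow_pred]
    exact sum_le_hasSum _ (fun i _ => by positivity) hsum

lemma sum_range_succ_mul_pow_pred_le (hx₀ : 0 ≤ x) (hx₁ : x < 1) (n : ℕ) :
    ∑ i ∈ range (n + 1), (i : ℝ) * x ^ (i - 1) ≤ n / (1 - x) := by
  rw [sum_range_succ_mul_pow_pred]
  calc ∑ i ∈ range n, ((i : ℝ) + 1) * x ^ i ≤ ∑ i ∈ range n, (n : ℝ) * x ^ i := by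
        gcongr with i hi
        exact_mod_cast mem_range.mp hi
    _ ≤ n * (1 / (1 - x)) := by
        rw [← mul_sum]; gcongr; exact geom_sum_le_one_div_one_sub hx₀ hx₁ n
    _ = n / (1 - x) := by ring

end Scalar

lemma sum_range_ite_shift {M : Type*} [AddCommMonoid M] {H j : ℕ} (hj : j ≤ H) (f : ℕ → M) :
    ∑ i ∈ range (2 * H + 1), (if j < i ∧ i - j ≤ H then f (i - j - 1) else 0) =
      ∑ k ∈ range H, f k := by
  rw [← sum_filter]
  have hfilter : (range (2 * H + 1)).filter (fun i => j < i ∧ i - j ≤ H) =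
      (range H).map (addLeftEmbedding (j + 1)) := by
    ext i
    simp only [mem_filter, mem_range, mem_map, addLeftEmbedding_apply]
    constructor
    · rintro ⟨-, hji, hiH⟩
      exact ⟨i - j - 1, by omega, by omega⟩
    · rintro ⟨k, hk, rfl⟩
      omega
  rw [hfilter, sum_map]
  exact sum_congr rfl fun k _ => by rw [addLeftEmbedding_apply, show j + 1 + k - j - 1 = k by omega]

lemma sum_range_sum_range_ite_mul (H : ℕ) (a b : ℕ → ℝ) :
    ∑ i ∈ range (2 * H + 1), ∑ j ∈ range (H + 1),
        (if j < i ∧ i - j ≤ H then a j * b (i - j - 1) else 0) =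
      (∑ j ∈ range (H + 1), a j) * ∑ k ∈ range H, b k := by
  rw [sum_comm, sum_mul_sum]
  exact sum_congr rfl fun j hj =>
    sum_range_ite_shift (by simpa [Nat.lt_succ_iff] using hj) (fun k => a j * b k)

section NormedRing

variable {R : Type*} [NormedRing R]

lemma norm_mul_pow_mul_le (a x b : R) (n : ℕ) : ‖a * x ^ n * b‖ ≤ ‖a‖ * ‖x‖ ^ n * ‖b‖ := by
  rcases n.eq_zero_or_pos with rfl | hn
  · simpa using norm_mul_le a b
  · calc ‖a * x ^ n * b‖ ≤ ‖a‖ * ‖x ^ n‖ * ‖b‖ := norm_mul₃_le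
      _ ≤ ‖a‖ * ‖x‖ ^ n * ‖b‖ := by gcongr; exact norm_pow_le' x hn

lemma pow_sub_pow_eq_sum (x y : R) (n : ℕ) :
    x ^ n - y ^ n = ∑ k ∈ range n, x ^ k * (x - y) * y ^ (n - 1 - k) := by
  induction n with
  | zero => simp
  | succ n ih =>
    rw [sum_range_succ', pow_succ' x, pow_succ' y]
    have hshift : ∀ k ∈ range n, x ^ (k + 1) * (x - y) * y ^ (n + 1 - 1 - (k + 1)) =
        x * (x ^ k * (x - y) * y ^ (n - 1 - k)) := fun k _ => by
      rw [show n + 1 - 1 - (k + 1) = n - 1 - k by omega, pow_succ']; noncomm_ring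
    rw [sum_congr rfl hshift, ← mul_sum, ← ih, Nat.add_sub_cancel, Nat.sub_zero]
    noncomm_ring

lemma norm_pow_sub_pow_le {x y : R} {c a : ℝ} (hx : ∀ k, ‖x ^ k‖ ≤ c * a ^ k)
    (hy : ∀ k, ‖y ^ k‖ ≤ c * a ^ k) (n : ℕ) :
    ‖x ^ n - y ^ n‖ ≤ n * c ^ 2 * ‖x - y‖ * a ^ (n - 1) := by
  rw [pow_sub_pow_eq_sum]
  have hterm : ∀ k ∈ range n, ‖x ^ k * (x - y) * y ^ (n - 1 - k)‖ ≤ c ^ 2 * ‖x - y‖ * a ^ (n - 1) :=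
    fun k hk => by
      calc ‖x ^ k * (x - y) * y ^ (n - 1 - k)‖
          ≤ ‖x ^ k‖ * ‖x - y‖ * ‖y ^ (n - 1 - k)‖ := norm_mul₃_le
        _ ≤ (c * a ^ k) * ‖x - y‖ * (c * a ^ (n - 1 - k)) := by
            gcongr
            exacts [mul_nonneg ((norm_nonneg _).trans (hx k)) (norm_nonneg _), hx k, hy _]
        _ = c ^ 2 * ‖x - y‖ * a ^ (k + (n - 1 - k)) := by ring
        _ = c ^ 2 * ‖x - y‖ * a ^ (n - 1) := by
            rw [show k + (n - 1 - k) = n - 1 by have := mem_range.mp hk; omega]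
  calc ‖∑ k ∈ range n, x ^ k * (x - y) * y ^ (n - 1 - k)‖
      ≤ ∑ k ∈ range n, c ^ 2 * ‖x - y‖ * a ^ (n - 1) := norm_sum_le_of_le _ hterm
    _ = n * c ^ 2 * ‖x - y‖ * a ^ (n - 1) := by rw [sum_const, card_range, nsmul_eq_mul]; ring

end NormedRing

lemma norm_closedLoop_sub_le {d₁ d₂ : ℕ} {κ ε : ℝ} {A Ahat : Mat d₁ d₁} {B Bhat : Mat d₁ d₂}
    {K : Mat d₂ d₁} (hK : ‖K‖ ≤ κ) (hκ : 1 ≤ κ) (hA : ‖A - Ahat‖ ≤ ε)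
    (hB : ‖B - Bhat‖ ≤ ε) : ‖(Ahat - Bhat * K) - (A - B * K)‖ ≤ 2 * κ * ε := by
  have hε : 0 ≤ ε := (norm_nonneg _).trans hA
  calc ‖(Ahat - Bhat * K) - (A - B * K)‖ = ‖-(A - Ahat) + (B - Bhat) * K‖ := by
        rw [Matrix.sub_mul]; congr 1; abel
    _ ≤ ‖A - Ahat‖ + ‖B - Bhat‖ * ‖K‖ := by
        grw [norm_add_le, norm_neg, Matrix.l2_opNorm_mul]
    _ ≤ ε + ε * κ := by gcongr
    _ ≤ 2 * κ * ε := by nlinarith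

/-- The transfer matrix `Ψ_i` of a time-invariant parameter `M`, with the powers `(A - B K) ^ j`
and the products `(A - B K) ^ j B` replaced by arbitrary sequences `P j` and `Q j`. -/
noncomputable def transferMat {d₁ d₂ : ℕ} (H : ℕ) (P : ℕ → Mat d₁ d₁) (Q : ℕ → Mat d₁ d₂)
    (M : ℕ → Mat d₂ d₁) (i : ℕ) : Mat d₁ d₁ :=
  (if i ≤ H then P i else 0) +
    ∑ j ∈ range (H + 1), if j < i ∧ i - j ≤ H then Q j * M (i - j - 1) else 0

section Transfer

variable {d₁ d₂ : ℕ} {H : ℕ}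

lemma Psi_const_eq_transferMat (A : Mat d₁ d₁) (B : Mat d₁ d₂) (K : Mat d₂ d₁)
    (M : ℕ → Mat d₂ d₁) (t i : ℕ) :
    Psi H A B K (fun _ => M) t H i =
      transferMat H (fun n => (A - B * K) ^ n) (fun n => (A - B * K) ^ n * B) M i :=
  rfl

lemma transferMat_sub (P P' : ℕ → Mat d₁ d₁) (Q Q' : ℕ → Mat d₁ d₂) (M : ℕ → Mat d₂ d₁)
    (i : ℕ) :
    transferMat H P Q M i - transferMat H P' Q' M i = transferMat H (P - P') (Q - Q') M i := by
  simp only [transferMat, Pi.sub_apply]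
  rw [add_sub_add_comm, ← sum_sub_distrib]
  congr 1
  · split_ifs <;> simp
  · exact sum_congr rfl fun j _ => by split_ifs <;> simp [Matrix.sub_mul]

lemma sum_norm_transferMat_le {P : ℕ → Mat d₁ d₁} {Q : ℕ → Mat d₁ d₂} {M : ℕ → Mat d₂ d₁}
    {p q m : ℕ → ℝ} (hP : ∀ i ≤ H, ‖P i‖ ≤ p i) (hQ : ∀ j ≤ H, ‖Q j‖ ≤ q j)
    (hM : ∀ k < H, ‖M k‖ ≤ m k) :
    ∑ i ∈ range (2 * H + 1), ‖transferMat H P Q M i‖ ≤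
      ∑ i ∈ range (H + 1), p i + (∑ j ∈ range (H + 1), q j) * ∑ k ∈ range H, m k := by
  have hterm : ∀ i, ‖transferMat H P Q M i‖ ≤ (if i ≤ H then p i else 0) +
      ∑ j ∈ range (H + 1), if j < i ∧ i - j ≤ H then q j * m (i - j - 1) else 0 := fun i => by
    refine (norm_add_le _ _).trans (add_le_add ?_ (norm_sum_le_of_le _ fun j hj => ?_))
    · split_ifs with hi
      exacts [hP i hi, by simp]
    · split_ifs with hji
      · have hj : j ≤ H := Nat.lt_succ_iff.mp (mem_range.mp hj)
        exact (Matrix.l2_opNorm_mul _ _).trans (mul_le_mul (hQ j hj) (hM _ (by omega))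
          (norm_nonneg _) ((norm_nonneg _).trans (hQ j hj)))
      · simp
  have hfilter : (range (2 * H + 1)).filter (· ≤ H) = range (H + 1) := by
    ext i; simp only [mem_filter, mem_range]; omega
  calc ∑ i ∈ range (2 * H + 1), ‖transferMat H P Q M i‖
      ≤ ∑ i ∈ range (2 * H + 1), ((if i ≤ H then p i else 0) +
          ∑ j ∈ range (H + 1), if j < i ∧ i - j ≤ H then q j * m (i - j - 1) else 0) :=
        sum_le_sum fun i _ => hterm i
    _ = _ := by rw [sum_add_distrib, sum_range_sum_range_ite_mul, ← sum_filter, hfilter]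

end Transfer

lemma mulV_sub_mulV {m n : Type*} [Fintype m] [Fintype n] (F G : Matrix m n ℝ)
    (u v : EuclideanSpace ℝ n) : mulV F u - mulV G v = mulV (F - G) u + mulV G (u - v) := by
  ext a
  simp [mulV, Matrix.sub_mulVec, Matrix.mulVec_sub]

lemma norm_sum_mulV_sub_sum_mulV_le {ι m n : Type*} [Fintype m] [Fintype n] [DecidableEq n]
    (s : Finset ι) (F G : ι → Matrix m n ℝ) (u v : ι → EuclideanSpace ℝ n) {a b : ℝ}
    (hu : ∀ i ∈ s, ‖u i‖ ≤ a) (huv : ∀ i ∈ s, ‖u i - v i‖ ≤ b) :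
    ‖∑ i ∈ s, mulV (F i) (u i) - ∑ i ∈ s, mulV (G i) (v i)‖ ≤
      (∑ i ∈ s, ‖F i - G i‖) * a + (∑ i ∈ s, ‖G i‖) * b := by
  rw [← sum_sub_distrib, sum_mul, sum_mul, ← sum_add_distrib]
  refine norm_sum_le_of_le s fun i hi => ?_
  rw [mulV_sub_mulV]
  refine (norm_add_le _ _).trans (add_le_add ?_ ?_)
  · exact (Matrix.l2_opNorm_mulVec _ _).trans (by gcongr; exact hu i hi)
  · exact (Matrix.l2_opNorm_mulVec _ _).trans (by gcongr; exact huv i hi)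

namespace StronglyStable

variable {d₁ d₂ : ℕ} {κ γ γ' ε β δ η C : ℝ} {H : ℕ} {A Ahat : Mat d₁ d₁} {B Bhat : Mat d₁ d₂}
  {K : Mat d₂ d₁} {M : ℕ → Mat d₂ d₁}

lemma nonneg (h : StronglyStable κ γ A B K) : 0 ≤ κ :=
  (norm_nonneg K).trans h.1

lemma le_one (h : StronglyStable κ γ A B K) : γ ≤ 1 := by
  obtain ⟨-, -, L, -, -, hL, -⟩ := h
  linarith [norm_nonneg L]

lemma norm_pow_le (h : StronglyStable κ γ A B K) (n : ℕ) :
    ‖(A - B * K) ^ n‖ ≤ κ ^ 2 * (1 - γ) ^ n := by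
  obtain ⟨-, H, L, ⟨u, rfl⟩, hX, hL, hH, hHinv⟩ := h
  rw [hX, ← Matrix.coe_units_inv, Units.conj_pow]
  rw [← Matrix.coe_units_inv] at hHinv
  have hκ : 0 ≤ κ := (norm_nonneg _).trans hH
  have hρ : 0 ≤ 1 - γ := (norm_nonneg _).trans hL
  calc ‖(u : Mat d₁ d₁) * L ^ n * ↑u⁻¹‖ ≤ ‖(u : Mat d₁ d₁)‖ * ‖L‖ ^ n * ‖(↑u⁻¹ : Mat d₁ d₁)‖ :=
        norm_mul_pow_mul_le _ _ _ n
    _ ≤ κ * (1 - γ) ^ n * κ := by gcongr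
    _ = κ ^ 2 * (1 - γ) ^ n := by ring

lemma of_norm_sub_le (h : StronglyStable κ γ A B K) (hκ : 1 ≤ κ) (hA : ‖A - Ahat‖ ≤ ε)
    (hB : ‖B - Bhat‖ ≤ ε) : StronglyStable κ (γ - 2 * κ ^ 3 * ε) Ahat Bhat K := by
  obtain ⟨hK, H, L, hU, hX, hL, hH, hHinv⟩ := h
  set E := (Ahat - Bhat * K) - (A - B * K)
  have hE : ‖E‖ ≤ 2 * κ * ε := norm_closedLoop_sub_le hK hκ hA hB
  have hHH : H * H⁻¹ = 1 := Matrix.mul_nonsing_inv H ((Matrix.isUnit_iff_isUnit_det H).mp hU)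
  refine ⟨hK, H, L + H⁻¹ * E * H, hU, ?_, ?_, hH, hHinv⟩
  · calc Ahat - Bhat * K = H * L * H⁻¹ + (H * H⁻¹) * E * (H * H⁻¹) := by
          rw [hHH, one_mul, mul_one, ← hX, add_sub_cancel]
      _ = H * (L + H⁻¹ * E * H) * H⁻¹ := by noncomm_ring
  · calc ‖L + H⁻¹ * E * H‖ ≤ ‖L‖ + ‖H⁻¹‖ * ‖E‖ * ‖H‖ := (norm_add_le _ _).trans (by
          gcongr; exact norm_mul₃_le)
      _ ≤ (1 - γ) + κ * (2 * κ * ε) * κ := by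
          have hκ₀ : 0 ≤ κ := (norm_nonneg _).trans hK
          have hε : 0 ≤ ε := (norm_nonneg _).trans hA
          gcongr
      _ = 1 - (γ - 2 * κ ^ 3 * ε) := by ring

lemma sum_norm_Psi_le (h : StronglyStable κ γ A B K) (hγ : 0 < γ) (hB : ‖B‖ ≤ κ)
    (hC : 0 ≤ C) (hM : ∀ k < H, ‖M k‖ ≤ C) (t : ℕ) :
    ∑ i ∈ range (2 * H + 1), ‖Psi H A B K (fun _ => M) t H i‖ ≤ (κ ^ 2 + H * κ ^ 3 * C) / γ := by
  have hκ := h.nonneg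
  have hρ : 0 ≤ 1 - γ := sub_nonneg.mpr h.le_one
  have hgeom : ∑ i ∈ range (H + 1), (1 - γ) ^ i ≤ 1 / γ := by
    simpa using geom_sum_le_one_div_one_sub hρ (by linarith) (H + 1)
  have hQ : ∀ j ≤ H, ‖(A - B * K) ^ j * B‖ ≤ κ ^ 3 * (1 - γ) ^ j := fun j _ =>
    calc ‖(A - B * K) ^ j * B‖ ≤ κ ^ 2 * (1 - γ) ^ j * κ :=
          (Matrix.l2_opNorm_mul _ _).trans (by gcongr; exact h.norm_pow_le j)
      _ = κ ^ 3 * (1 - γ) ^ j := by ring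
  simp only [Psi_const_eq_transferMat]
  refine (sum_norm_transferMat_le (fun i _ => h.norm_pow_le i) hQ hM).trans ?_
  rw [← mul_sum, ← mul_sum, sum_const, card_range, nsmul_eq_mul]
  calc κ ^ 2 * ∑ i ∈ range (H + 1), (1 - γ) ^ i +
        κ ^ 3 * (∑ i ∈ range (H + 1), (1 - γ) ^ i) * (H * C)
      ≤ κ ^ 2 * (1 / γ) + κ ^ 3 * (1 / γ) * (H * C) := by gcongr
    _ = (κ ^ 2 + H * κ ^ 3 * C) / γ := by ring

lemma sum_norm_Psi_sub_le (h : StronglyStable κ γ A B K) (hhat : StronglyStable κ γ' Ahat Bhat K)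
    (hγ' : 0 < γ') (hγγ' : γ' ≤ γ) (hBhat : ‖Bhat‖ ≤ β) (hBd : ‖Bhat - B‖ ≤ η)
    (hXd : ‖(Ahat - Bhat * K) - (A - B * K)‖ ≤ δ) (hC : 0 ≤ C) (hM : ∀ k < H, ‖M k‖ ≤ C)
    (t : ℕ) :
    ∑ i ∈ range (2 * H + 1),
        ‖Psi H Ahat Bhat K (fun _ => M) t H i - Psi H A B K (fun _ => M) t H i‖ ≤
      κ ^ 4 * δ / γ' ^ 2 + (κ ^ 4 * δ * β * H / γ' + κ ^ 2 * η / γ) * (H * C) := by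
  set X := A - B * K
  set Xhat := Ahat - Bhat * K
  have hρ : 0 ≤ 1 - γ := sub_nonneg.mpr h.le_one
  have hρhat : 0 ≤ 1 - γ' := sub_nonneg.mpr hhat.le_one
  have hpow : ∀ n, ‖X ^ n‖ ≤ κ ^ 2 * (1 - γ') ^ n := fun n =>
    (h.norm_pow_le n).trans (by gcongr)
  have hpow_sub : ∀ n : ℕ, ‖Xhat ^ n - X ^ n‖ ≤ κ ^ 4 * δ * (n * (1 - γ') ^ (n - 1)) := fun n =>
    calc ‖Xhat ^ n - X ^ n‖ ≤ n * (κ ^ 2) ^ 2 * ‖Xhat - X‖ * (1 - γ') ^ (n - 1) :=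
          norm_pow_sub_pow_le hhat.norm_pow_le hpow n
      _ ≤ n * (κ ^ 2) ^ 2 * δ * (1 - γ') ^ (n - 1) := by gcongr
      _ = κ ^ 4 * δ * (n * (1 - γ') ^ (n - 1)) := by ring
  have hQ : ∀ j ≤ H, ‖Xhat ^ j * Bhat - X ^ j * B‖ ≤
      κ ^ 4 * δ * β * (j * (1 - γ') ^ (j - 1)) + κ ^ 2 * η * (1 - γ) ^ j := fun j _ =>
    calc ‖Xhat ^ j * Bhat - X ^ j * B‖ = ‖(Xhat ^ j - X ^ j) * Bhat + X ^ j * (Bhat - B)‖ := by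
          rw [Matrix.sub_mul, Matrix.mul_sub]; abel_nf
      _ ≤ ‖Xhat ^ j - X ^ j‖ * ‖Bhat‖ + ‖X ^ j‖ * ‖Bhat - B‖ := by
          grw [norm_add_le, Matrix.l2_opNorm_mul, Matrix.l2_opNorm_mul]
      _ ≤ κ ^ 4 * δ * (j * (1 - γ') ^ (j - 1)) * β + κ ^ 2 * (1 - γ) ^ j * η := by
          gcongr
          exacts [(norm_nonneg _).trans (hpow_sub j), hpow_sub j, h.norm_pow_le j]
      _ = _ := by ring
  simp only [Psi_const_eq_transferMat, transferMat_sub]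
  refine (sum_norm_transferMat_le (fun i _ => hpow_sub i) hQ hM).trans ?_
  rw [sum_add_distrib, ← mul_sum, ← mul_sum, ← mul_sum, sum_const, card_range, nsmul_eq_mul]
  have hδ : 0 ≤ δ := (norm_nonneg _).trans hXd
  have hβ : 0 ≤ β := (norm_nonneg _).trans hBhat
  have hη : 0 ≤ η := (norm_nonneg _).trans hBd
  have hS₁ := sum_range_mul_pow_pred_le hρhat (by linarith) (H + 1)
  have hS₂ := sum_range_succ_mul_pow_pred_le hρhat (by linarith) H
  have hS₃ := geom_sum_le_one_div_one_sub hρ (by linarith) (H + 1)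
  rw [sub_sub_cancel] at hS₁ hS₂ hS₃
  calc κ ^ 4 * δ * ∑ i ∈ range (H + 1), (i : ℝ) * (1 - γ') ^ (i - 1) +
        (κ ^ 4 * δ * β * ∑ i ∈ range (H + 1), (i : ℝ) * (1 - γ') ^ (i - 1) +
          κ ^ 2 * η * ∑ i ∈ range (H + 1), (1 - γ) ^ i) * (H * C)
      ≤ κ ^ 4 * δ * (1 / γ' ^ 2) + (κ ^ 4 * δ * β * (H / γ') + κ ^ 2 * η * (1 / γ)) * (H * C) := by
        gcongr
    _ = _ := by ring

end StronglyStable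

theorem surrogate_state_difference_estimated_system_general {d₁ d₂ : ℕ}
    (κ γ ε C W ζ : ℝ) (Hn : ℕ) (hH : 1 ≤ Hn)
    (hκ : 1 ≤ κ) (hγ0 : 0 < γ) (hγ1 : γ < 1)
    (A Ahat : Mat d₁ d₁) (B Bhat : Mat d₁ d₂) (K : Mat d₂ d₁)
    (hss : StronglyStable κ γ A B K) (hB : ‖B‖ ≤ κ)
    (hAe : ‖A - Ahat‖ ≤ ε) (hBe : ‖B - Bhat‖ ≤ ε)
    (hε0 : 0 < ε) (hεb : ε < γ / (2 * κ ^ 3))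
    (M : ℕ → Mat d₂ d₁) (hM : ∀ i, i < Hn → ‖M i‖ ≤ C * (1 - γ) ^ i)
    (w what : ℤ → Vec d₁)
    (t : ℕ)
    (hwhat : ∀ s : ℤ, (t : ℤ) - 2 * Hn ≤ s → s ≤ t → ‖what s‖ ≤ W + ζ * ε)
    (hdiff : ∀ s : ℤ, (t : ℤ) - 2 * Hn ≤ s → s ≤ t → ‖what s - w s‖ ≤ ζ * ε) :
    ‖ySurr Hn Ahat Bhat K (fun _ => M) what t - ySurr Hn A B K (fun _ => M) w t‖ ≤
      (2 * κ ^ 5 * ε / (γ - 2 * κ ^ 3 * ε) ^ 2 +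
        2 * κ ^ 5 * Hn ^ 2 * C * (κ + ε) * ε /
          ((1 - γ + 2 * κ ^ 3 * ε) * (γ - 2 * κ ^ 3 * ε)) +
        (Hn + 1) * κ ^ 2 * C * ε / ((1 - γ) * γ)) * (W + ζ * ε) +
      (κ ^ 2 + Hn * κ ^ 3 * C) / γ * (ζ * ε) := by
  have hgap : 0 < γ - 2 * κ ^ 3 * ε := by
    rw [lt_div_iff₀ (by positivity)] at hεb; linarith
  have hC : 0 ≤ C := by simpa using (norm_nonneg _).trans (hM 0 hH)
  have hMC : ∀ k < Hn, ‖M k‖ ≤ C := fun k hk =>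
    (hM k hk).trans (mul_le_of_le_one_right hC (pow_le_one₀ (by linarith) (by linarith)))
  have hBhat : ‖Bhat‖ ≤ κ + ε := by
    grw [norm_le_norm_add_norm_sub' Bhat B, norm_sub_rev, hB, hBe]
  have hD := hss.sum_norm_Psi_sub_le (hss.of_norm_sub_le hκ hAe hBe) hgap
    (sub_le_self _ (by positivity)) hBhat (by rwa [norm_sub_rev] : ‖Bhat - B‖ ≤ ε)
    (norm_closedLoop_sub_le hss.1 hκ hAe hBe) hC hMC t
  have hP := hss.sum_norm_Psi_le hγ0 hB hC hMC t
  have hWζ : 0 ≤ W + ζ * ε := (norm_nonneg _).trans (hwhat t (by omega) le_rfl)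
  have hζε : 0 ≤ ζ * ε := (norm_nonneg _).trans (hdiff t (by omega) le_rfl)
  have hy := norm_sum_mulV_sub_sum_mulV_le (range (2 * Hn + 1))
    (fun i => Psi Hn Ahat Bhat K (fun _ => M) t Hn i) (fun i => Psi Hn A B K (fun _ => M) t Hn i)
    (fun i : ℕ => what (t - i)) (fun i : ℕ => w (t - i))
    (fun i hi => hwhat _ (by have := mem_range.mp hi; omega) (by omega))
    (fun i hi => hdiff _ (by have := mem_range.mp hi; omega) (by omega))
  refine hy.trans (add_le_add (mul_le_mul_of_nonneg_right (hD.trans ?_) hWζ)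
    (mul_le_mul_of_nonneg_right hP hζε))
  calc κ ^ 4 * (2 * κ * ε) / (γ - 2 * κ ^ 3 * ε) ^ 2 +
        (κ ^ 4 * (2 * κ * ε) * (κ + ε) * Hn / (γ - 2 * κ ^ 3 * ε) + κ ^ 2 * ε / γ) * (Hn * C)
      = 2 * κ ^ 5 * ε / (γ - 2 * κ ^ 3 * ε) ^ 2 +
        2 * κ ^ 5 * Hn ^ 2 * C * (κ + ε) * ε / (γ - 2 * κ ^ 3 * ε) +
        Hn * κ ^ 2 * C * ε / γ := by ring
    _ ≤ _ := by
      gcongr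
      · exact mul_le_of_le_one_left hgap.le (by linarith)
      · linarith
      · exact mul_le_of_le_one_left hγ0.le (by linarith)

/-- difference of the time-invariant surrogate states computed on
the estimated system/noises and on the true system/noises.
Here `ySurr … t` is the surrogate state `y^K_{t+1}`. -/
theorem surrogate_state_difference_estimated_system {d₁ d₂ : ℕ}
    (κ γ ε C W ζ : ℝ) (Hn : ℕ) (hH : 1 ≤ Hn)
    (hκ : 1 ≤ κ) (hγ0 : 0 < γ) (hγ1 : γ < 1)
    (A Ahat : Mat d₁ d₁) (B Bhat : Mat d₁ d₂) (K : Mat d₂ d₁)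
    (hss : StronglyStable κ γ A B K) (hB : ‖B‖ ≤ κ)
    (hAe : ‖A - Ahat‖ ≤ ε) (hBe : ‖B - Bhat‖ ≤ ε)
    (hε0 : 0 < ε) (hεb : ε < γ / (2 * κ ^ 3))
    (M : ℕ → Mat d₂ d₁) (hM : ∀ i, i < Hn → ‖M i‖ ≤ C * (1 - γ) ^ i)
    (hζ : 0 ≤ ζ)
    (w what : ℤ → Vec d₁)
    (hw0 : ∀ s : ℤ, s ≤ 0 → w s = 0) (hwhat0 : ∀ s : ℤ, s ≤ 0 → what s = 0)
    (t : ℕ)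
    (hw : ∀ s : ℤ, (t : ℤ) - 2 * Hn ≤ s → s ≤ t → ‖w s‖ ≤ W)
    (hwhat : ∀ s : ℤ, (t : ℤ) - 2 * Hn ≤ s → s ≤ t → ‖what s‖ ≤ W + ζ * ε)
    (hdiff : ∀ s : ℤ, (t : ℤ) - 2 * Hn ≤ s → s ≤ t → ‖what s - w s‖ ≤ ζ * ε) :
    ‖ySurr Hn Ahat Bhat K (fun _ => M) what t - ySurr Hn A B K (fun _ => M) w t‖ ≤
      (2 * κ ^ 5 * ε / (γ - 2 * κ ^ 3 * ε) ^ 2 +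
        2 * κ ^ 5 * Hn ^ 2 * C * (κ + ε) * ε /
          ((1 - γ + 2 * κ ^ 3 * ε) * (γ - 2 * κ ^ 3 * ε)) +
        (Hn + 1) * κ ^ 2 * C * ε / ((1 - γ) * γ)) * (W + ζ * ε) +
      (κ ^ 2 + Hn * κ ^ 3 * C) / γ * (ζ * ε) :=
  surrogate_state_difference_estimated_system_general κ γ ε C W ζ Hn hH hκ hγ0 hγ1 A Ahat B Bhat K
    hss hB hAe hBe hε0 hεb M hM w what t hwhat hdiff
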